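/- arXiv:2512.19208 — 5 statements merged into one kernel-verified Lean document; each statement's English description precedes it below -/
import Mathlib

section
/- Let $p \in [1,\infty)$ and $h: M \to N$ measurable with separable range. For every $f \in \mathcal{L}^p_h(M,N)$ there exists a sequence $(B_n)$ of measurable sets of finite $\mu_M$-measure such that, up to a $\mu_M$-null set, $\{x : f(x) \neq h(x)\} = \bigcup_n B_n$ and $h$ is bounded on each $B_n$. -/
/-! The set `{f ≠ h}` is the increasing union of the Chebyshev sets `{dist f h ≥ 1/n}`, which have
finite measure because `dist f h ∈ Lᵖ` with `0 < p < ∞`. Intersecting the `n`-th of them with the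
preimage under `h` of the ball of radius `n` about a fixed point makes `h` bounded on each piece
without changing the union. -/

open MeasureTheory Set TopologicalSpace Filter

noncomputable def Dp {M : Type*} {N : Type*} [MeasurableSpace M] [PseudoMetricSpace N]
    (mu : Measure M) (p : ENNReal) (f g : M → N) : ENNReal :=
  eLpNorm (fun x => dist (f x) (g x)) p mu

open scoped ENNReal

theorem Metric.exists_monotone_measurableSet_isBounded_iUnion_eq_univ (N : Type*)
    [PseudoMetricSpace N] [MeasurableSpace N] [OpensMeasurableSpace N] :
    ∃ K : ℕ → Set N, Monotone K ∧ (∀ n, MeasurableSet (K n) ∧ Bornology.IsBounded (K n)) ∧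
      ⋃ n, K n = univ := by
  rcases isEmpty_or_nonempty N with _ | ⟨⟨y⟩⟩
  · exact ⟨fun _ => ∅, monotone_const, fun _ => ⟨.empty, Bornology.isBounded_empty⟩,
      Subsingleton.elim _ _⟩
  · exact ⟨fun n => ball y n, fun m n hmn => ball_subset_ball (Nat.cast_le.2 hmn),
      fun _ => ⟨measurableSet_ball, isBounded_ball⟩, iUnion_ball_nat y⟩

theorem MeasureTheory.MemLp.exists_monotone_measure_lt_top_iUnion_eq_support
    {M E : Type*} [MeasurableSpace M] [NormedAddCommGroup E] {μ : Measure M} {p : ℝ≥0∞}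
    (hp : p ≠ 0) (hp' : p ≠ ∞) {g : M → E} (hgm : StronglyMeasurable g) (hg : MemLp g p μ) :
    ∃ A : ℕ → Set M, Monotone A ∧ (∀ n, MeasurableSet (A n) ∧ μ (A n) < ∞) ∧
      ⋃ n, A n = Function.support g := by
  refine ⟨fun n => {x | (n : ℝ≥0∞)⁻¹ ≤ ‖g x‖ₑ}, fun m n hmn x hx => ?_, fun n => ⟨?_, ?_⟩, ?_⟩
  · exact (ENNReal.inv_le_inv.2 (Nat.cast_le.2 hmn)).trans hx
  · exact measurableSet_le measurable_const hgm.enorm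
  · exact hg.meas_ge_lt_top'_enorm hp hp' (by simp) (by simp)
  · ext x
    simp only [mem_iUnion, mem_ofPred_eq, Function.mem_support]
    rw [← enorm_ne_zero]
    constructor
    · rintro ⟨n, hn⟩
      exact ((ENNReal.inv_pos.2 (ENNReal.natCast_ne_top n)).trans_le hn).ne'
    · intro hx
      obtain ⟨n, hn⟩ := ENNReal.exists_inv_nat_lt hx
      exact ⟨n, hn.le⟩

theorem exists_isBounded_image_iUnion_eq_of_monotone {M N : Type*} [MeasurableSpace M]
    [PseudoMetricSpace N] [MeasurableSpace N] [OpensMeasurableSpace N] {μ : Measure M}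
    {h : M → N} (hm : Measurable h) {A : ℕ → Set M} (hA_mono : Monotone A)
    (hA : ∀ n, MeasurableSet (A n) ∧ μ (A n) < ∞) :
    ∃ B : ℕ → Set M,
      (∀ n, MeasurableSet (B n) ∧ μ (B n) < ∞ ∧ Bornology.IsBounded (h '' B n)) ∧
      ⋃ n, B n = ⋃ n, A n := by
  obtain ⟨K, hK_mono, hK, hK_univ⟩ :=
    Metric.exists_monotone_measurableSet_isBounded_iUnion_eq_univ N
  refine ⟨fun n => A n ∩ h ⁻¹' K n, fun n => ⟨(hA n).1.inter (hm (hK n).1),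
    (measure_mono inter_subset_left).trans_lt (hA n).2,
    (hK n).2.subset ((image_mono inter_subset_right).trans (image_preimage_subset h _))⟩, ?_⟩
  rw [iUnion_inter_of_monotone hA_mono fun m n hmn => preimage_mono (hK_mono hmn),
    ← preimage_iUnion, hK_univ, preimage_univ, inter_univ]

theorem stmt6 {M N : Type*} [MeasurableSpace M] [MetricSpace N]
    [MeasurableSpace N] [BorelSpace N]
    (μ : Measure M) (p : ENNReal) (hp : 1 ≤ p) (hptop : p ≠ ⊤)
    (h : M → N) (hm : Measurable h) (hs : IsSeparable (Set.range h))
    (f : M → N) (hfm : Measurable f) (hfs : IsSeparable (Set.range f))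
    (hfin : Dp μ p f h < ⊤) :
    ∃ B : ℕ → Set M,
      (∀ n, MeasurableSet (B n) ∧ μ (B n) < ⊤ ∧ Bornology.IsBounded (h '' B n)) ∧
      μ (({x | f x ≠ h x} \ ⋃ n, B n) ∪ ((⋃ n, B n) \ {x | f x ≠ h x})) = 0 := by
  have hdist : StronglyMeasurable fun x => dist (f x) (h x) :=
    (stronglyMeasurable_iff_measurable_separable.2 ⟨hfm, hfs⟩).dist
      (stronglyMeasurable_iff_measurable_separable.2 ⟨hm, hs⟩)
  obtain ⟨A, hA_mono, hA, hA_supp⟩ :=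
    MemLp.exists_monotone_measure_lt_top_iUnion_eq_support (zero_lt_one.trans_le hp).ne' hptop
      hdist ⟨hdist.aestronglyMeasurable, hfin⟩
  obtain ⟨B, hB, hB_union⟩ := exists_isBounded_image_iUnion_eq_of_monotone hm hA_mono hA
  have hB_eq : ⋃ n, B n = {x | f x ≠ h x} := by
    rw [hB_union, hA_supp]
    ext x
    exact dist_ne_zero
  exact ⟨B, hB, by simp [hB_eq]⟩
end

section
/- Let $p \in [1,\infty]$ and $h$ measurable with separable range. If $\mu_M$ is not purely infinite, then $N$ admits an isometric (up to a constant positive scaling factor) embedding onto a closed subset of the metric space $(L^p_h(M,N), D_p)$. -/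
/-!
Choose a measurable set `t` of finite positive measure on which `h` is bounded, and send `y` to
the map equal to `y` on `t` and to `h` off `t`. Two such maps differ only on `t`, by the constant
`d(y, y')`, so they are at `D_p`-distance `μ(t)^(1/p) d(y, y')`. If the images of a sequence
converge to `f` in `D_p`, they converge in measure, so a subsequence converges a.e.: then `f`
agrees with `h` a.e. off `t` and is a.e. constant on `t`, i.e. `f` lies in the image.
-/

open MeasureTheory Set TopologicalSpace Filter

section Piecewise

variable {M N : Type*} {t : Set M} [DecidablePred (· ∈ t)]

theorem isSeparable_range_piecewise_const [TopologicalSpace N] {g : M → N}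
    (hg : IsSeparable (range g)) (y : N) : IsSeparable (range (t.piecewise (fun _ => y) g)) :=
  ((countable_singleton y).isSeparable.union hg).mono <|
    (range_piecewise _ _ _).trans_subset
      (union_subset_union ((image_subset_range _ _).trans (range_const_subset))
        (image_subset_range _ _))

theorem dist_piecewise_const_piecewise_const [PseudoMetricSpace N] (g : M → N) (y y' : N) :
    (fun x => dist (t.piecewise (fun _ => y) g x) (t.piecewise (fun _ => y') g x)) =
      t.indicator fun _ => dist y y' := by
  funext x
  by_cases hx : x ∈ t <;> simp [hx]

end Piecewise

section

variable {M N : Type*} [MeasurableSpace M] {μ : Measure M}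

theorem exists_subset_measure_ne_zero_isBounded_image [PseudoMetricSpace N] [MeasurableSpace N]
    [OpensMeasurableSpace N] {s : Set M} (hs : MeasurableSet s) (hμs : μ s ≠ 0) {h : M → N}
    (hm : Measurable h) :
    ∃ t ⊆ s, MeasurableSet t ∧ μ t ≠ 0 ∧ Bornology.IsBounded (h '' t) := by
  obtain ⟨x₀, -⟩ := nonempty_of_measure_ne_zero hμs
  have hcover : s = ⋃ n : ℕ, s ∩ h ⁻¹' Metric.closedBall (h x₀) n := by
    rw [← inter_iUnion, ← preimage_iUnion, Metric.iUnion_closedBall_nat, preimage_univ,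
      inter_univ]
  obtain ⟨n, hn⟩ : ∃ n : ℕ, μ (s ∩ h ⁻¹' Metric.closedBall (h x₀) n) ≠ 0 := by
    by_contra! hnull
    exact hμs (hcover ▸ measure_iUnion_null hnull)
  refine ⟨_, inter_subset_left, hs.inter (hm measurableSet_closedBall), hn, ?_⟩
  exact Metric.isBounded_closedBall.subset ((image_inter_subset _ _ _).trans inter_subset_right
    |>.trans (image_preimage_subset _ _))

theorem tendstoInMeasure_of_tendsto_Dp [PseudoMetricSpace N] {p : ENNReal} (hp : p ≠ 0)
    {u : ℕ → M → N} {f : M → N} (hu : ∀ n, AEStronglyMeasurable (u n) μ)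
    (hf : AEStronglyMeasurable f μ) (hlim : Tendsto (fun n => Dp μ p (u n) f) atTop (nhds 0)) :
    TendstoInMeasure μ u atTop f := by
  have hdist : TendstoInMeasure μ (fun n x => dist (u n x) (f x)) atTop 0 :=
    tendstoInMeasure_of_tendsto_eLpNorm hp (fun n => (hu n).dist hf) aestronglyMeasurable_const
      (by simpa only [Dp, sub_zero] using hlim)
  rw [tendstoInMeasure_iff_dist] at hdist ⊢
  simpa only [Pi.zero_apply, Real.dist_0_eq_abs, abs_dist] using hdist

variable {t : Set M} [DecidablePred (· ∈ t)]

theorem Dp_piecewise_const [PseudoMetricSpace N] {p : ENNReal} (hp : p ≠ 0) (ht : MeasurableSet t)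
    (hμt : μ t ≠ 0) (g : M → N) (y y' : N) :
    Dp μ p (t.piecewise (fun _ => y) g) (t.piecewise (fun _ => y') g) =
      μ t ^ (1 / p.toReal) * ENNReal.ofReal (dist y y') := by
  rw [Dp, dist_piecewise_const_piecewise_const, eLpNorm_indicator_const' ht hμt hp,
    Real.enorm_eq_ofReal dist_nonneg, mul_comm]

theorem Dp_piecewise_const_lt_top [PseudoMetricSpace N] (p : ENNReal) (hμt : μ t ≠ ⊤) {g : M → N}
    (hg : Bornology.IsBounded (g '' t)) (y : N) :
    Dp μ p (t.piecewise (fun _ => y) g) g < ⊤ := by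
  obtain ⟨r, hr⟩ := hg.subset_closedBall y
  have hle : ∀ x, ‖dist (t.piecewise (fun _ => y) g x) (g x)‖ ≤ t.indicator (fun _ => r) x := by
    intro x
    by_cases hx : x ∈ t
    · simpa [hx, dist_comm] using hr (mem_image_of_mem g hx)
    · simp [hx]
  calc Dp μ p (t.piecewise (fun _ => y) g) g ≤ eLpNorm (t.indicator fun _ => r) p μ :=
        eLpNorm_mono_real hle
    _ ≤ ‖r‖ₑ * μ t ^ (1 / p.toReal) := eLpNorm_indicator_const_le r p
    _ < ⊤ := ENNReal.mul_lt_top enorm_lt_top (ENNReal.rpow_lt_top_of_nonneg (by positivity) hμt)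

theorem exists_ae_eq_piecewise_const_of_tendstoInMeasure [MetricSpace N] (hμt : μ t ≠ 0)
    {g f : M → N} {y : ℕ → N}
    (hlim : TendstoInMeasure μ (fun n => t.piecewise (fun _ => y n) g) atTop f) :
    ∃ y₀, f =ᵐ[μ] t.piecewise (fun _ => y₀) g := by
  obtain ⟨ns, -, hae⟩ := hlim.exists_seq_tendsto_ae
  obtain ⟨x₁, hx₁, hy⟩ := Measure.exists_mem_of_measure_ne_zero_of_ae hμt (ae_restrict_of_ae hae)
  simp only [piecewise_eq_of_mem _ _ _ hx₁] at hy
  refine ⟨f x₁, ?_⟩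
  filter_upwards [hae] with x hx
  by_cases hxt : x ∈ t
  · simp only [piecewise_eq_of_mem _ _ _ hxt] at hx ⊢
    exact tendsto_nhds_unique hx hy
  · simp only [piecewise_eq_of_notMem _ _ _ hxt] at hx ⊢
    exact tendsto_nhds_unique hx tendsto_const_nhds

end

theorem stmt9 {M N : Type*} [MeasurableSpace M] [MetricSpace N]
    [MeasurableSpace N] [BorelSpace N]
    (μ : Measure M) (p : ENNReal) (hp : 1 ≤ p)
    (hμ : ∃ s, MeasurableSet s ∧ μ s ≠ 0 ∧ μ s ≠ ⊤)
    (h : M → N) (hm : Measurable h) (hs : IsSeparable (Set.range h)) :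
    ∃ (i : N → M → N) (c : ENNReal), 0 < c ∧ c < ⊤ ∧
      (∀ y, Measurable (i y) ∧ IsSeparable (Set.range (i y)) ∧ Dp μ p (i y) h < ⊤) ∧
      (∀ y y', Dp μ p (i y) (i y') = c * ENNReal.ofReal (dist y y')) ∧
      (∀ f : M → N, Measurable f → IsSeparable (Set.range f) → Dp μ p f h < ⊤ →
        ∀ y : ℕ → N,
          Tendsto (fun n => Dp μ p (i (y n)) f) atTop (nhds 0) →
          ∃ y₀ : N, f =ᵐ[μ] i y₀) := by
  classical
  obtain ⟨s, hsm, hs0, hstop⟩ := hμ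
  have hp0 : p ≠ 0 := (zero_lt_one.trans_le hp).ne'
  obtain ⟨t, hts, htm, ht0, htb⟩ := exists_subset_measure_ne_zero_isBounded_image hsm hs0 hm
  have httop : μ t ≠ ⊤ := ne_top_of_le_ne_top hstop (measure_mono hts)
  let i : N → M → N := fun y => t.piecewise (fun _ => y) h
  have hi_meas : ∀ y, Measurable (i y) := fun _ => Measurable.piecewise htm measurable_const hm
  have hi_sep : ∀ y, IsSeparable (range (i y)) := isSeparable_range_piecewise_const hs
  have haesm : ∀ {g : M → N}, Measurable g → IsSeparable (range g) → AEStronglyMeasurable g μ :=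
    fun hg hgs => (stronglyMeasurable_iff_measurable_separable.2 ⟨hg, hgs⟩).aestronglyMeasurable
  refine ⟨i, μ t ^ (1 / p.toReal), ENNReal.rpow_pos (pos_iff_ne_zero.2 ht0) httop,
    ENNReal.rpow_lt_top_of_nonneg (by positivity) httop,
    fun y => ⟨hi_meas y, hi_sep y, Dp_piecewise_const_lt_top p httop htb y⟩,
    Dp_piecewise_const hp0 htm ht0 h, fun f hfm hfs _ y hlim => ?_⟩
  exact exists_ae_eq_piecewise_const_of_tendstoInMeasure ht0 <|
    tendstoInMeasure_of_tendsto_Dp hp0 (fun _ => haesm (hi_meas _) (hi_sep _)) (haesm hfm hfs) hlim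
end

section
/- Let $p \in [1,\infty)$, $h$ measurable with separable range. If $L^p_h(M,N)$ is nontrivial (contains an element not a.e.\ equal to $h$) and separable as a metric space, then $(N,d_N)$ is separable. -/
open MeasureTheory Set TopologicalSpace Filter

/-!
The closure `S` of the union of the ranges of the dense family `D` is separable, so it suffices
that `S = N`. Suppose `y` is at distance `≥ δ > 0` from every value of every `D n`. The set where
`f ≠ h` has positive measure and is covered by the sets where `dist (f x) (h x) ≥ 1/(n+1)` and
`dist y (h x) ≤ n`, so one of them, `B`, has positive measure; it has finite measure because
`D_p(f, h) < ∞`. Redefining `h` to be `y` on `B` gives an element of `L^p_h` at distance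
`≥ δ μ(B)^{1/p}` from every `D n`, contradicting density.
-/

lemma isSeparable_range_piecewise_const_s14 {M N : Type*} [TopologicalSpace N] {B : Set M}
    [DecidablePred (· ∈ B)] {h : M → N} (hs : IsSeparable (range h)) (y : N) :
    IsSeparable (range (B.piecewise (fun _ => y) h)) :=
  ((finite_singleton y).isSeparable.union hs).mono <| by
    rw [range_piecewise]
    exact union_subset_union (image_subset_iff.2 fun _ _ => rfl) (image_subset_range _ _)

section Dp

variable {M N : Type*} [MeasurableSpace M] {μ : Measure M} {p : ENNReal} {B : Set M}

lemma enorm_mul_measure_rpow_le_Dp [PseudoMetricSpace N] {f g : M → N} (hp0 : p ≠ 0)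
    (hptop : p ≠ ⊤) (hB : MeasurableSet B) {δ : ℝ} (hδ : 0 ≤ δ)
    (hδB : ∀ x ∈ B, δ ≤ dist (f x) (g x)) :
    ‖δ‖ₑ * μ B ^ (1 / p.toReal) ≤ Dp μ p f g := by
  rw [← eLpNorm_indicator_const hB hp0 hptop]
  refine eLpNorm_mono_real fun x => ?_
  by_cases hx : x ∈ B
  · simpa [hx, abs_of_nonneg hδ] using hδB x hx
  · simp [hx]

lemma Dp_le_enorm_mul_measure_rpow [PseudoMetricSpace N] {f g : M → N}
    (hfg : ∀ x ∉ B, f x = g x) {R : ℝ} (hR : ∀ x ∈ B, dist (f x) (g x) ≤ R) :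
    Dp μ p f g ≤ ‖R‖ₑ * μ B ^ (1 / p.toReal) := by
  refine (eLpNorm_mono fun x => ?_).trans (eLpNorm_indicator_const_le (c := R) p)
  by_cases hx : x ∈ B
  · simpa [hx] using (hR x hx).trans (le_abs_self R)
  · simp [hx, hfg x hx]

lemma measure_lt_top_of_le_dist_of_Dp_lt_top [PseudoMetricSpace N] {f g : M → N}
    (hp0 : p ≠ 0) (hptop : p ≠ ⊤) (hfg : Dp μ p f g < ⊤) (hB : MeasurableSet B) {c : ℝ}
    (hc : 0 < c) (hcB : ∀ x ∈ B, c ≤ dist (f x) (g x)) : μ B < ⊤ := by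
  have hbound := (enorm_mul_measure_rpow_le_Dp hp0 hptop hB hc.le hcB).trans_lt hfg
  have hpow := ENNReal.lt_top_of_mul_ne_top_right hbound.ne (by simpa using hc.ne')
  exact (ENNReal.rpow_lt_top_iff_of_pos (by simp [ENNReal.toReal_pos hp0 hptop])).1 hpow

lemma exists_measure_pos_lt_top_dist_le [MetricSpace N] [MeasurableSpace N] [BorelSpace N]
    {f g : M → N} (hp0 : p ≠ 0) (hptop : p ≠ ⊤) (hf : StronglyMeasurable f)
    (hg : StronglyMeasurable g) (hfg : Dp μ p f g < ⊤) (hne : ¬ f =ᵐ[μ] g) (y : N) :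
    ∃ (B : Set M) (R : ℝ), MeasurableSet B ∧ 0 < μ B ∧ μ B < ⊤ ∧
      ∀ x ∈ B, dist y (g x) ≤ R := by
  set C : ℕ → Set M := fun n =>
    {x | 1 / (n + 1 : ℝ) ≤ dist (f x) (g x) ∧ dist y (g x) ≤ n}
  have hCm : ∀ n, MeasurableSet (C n) := fun n =>
    ((hf.dist hg).measurable measurableSet_Ici).inter
      ((stronglyMeasurable_const.dist hg).measurable measurableSet_Iic)
  obtain ⟨n, hn⟩ : ∃ n, μ (C n) ≠ 0 := by
    by_contra! hC
    refine hne (ae_iff.2 (measure_mono_null (fun x hx => ?_) (measure_iUnion_null hC)))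
    obtain ⟨k, hk⟩ := exists_nat_one_div_lt (dist_pos.2 hx)
    obtain ⟨m, hm⟩ := exists_nat_ge (dist y (g x))
    refine mem_iUnion.2 ⟨k + m, ?_, hm.trans (by simp)⟩
    refine le_trans ?_ hk.le
    gcongr
    simp
  exact ⟨C n, n, hCm n, pos_iff_ne_zero.2 hn,
    measure_lt_top_of_le_dist_of_Dp_lt_top hp0 hptop hfg (hCm n) (by positivity)
      (fun x hx => hx.1), fun x hx => hx.2⟩

end Dp

theorem stmt14 {M N : Type*} [MeasurableSpace M] [MetricSpace N]
    [MeasurableSpace N] [BorelSpace N]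
    (μ : Measure M) (p : ENNReal) (hp : 1 ≤ p) (hptop : p ≠ ⊤)
    (h : M → N) (hm : Measurable h) (hs : IsSeparable (Set.range h))
    (hnontriv : ∃ f : M → N, Measurable f ∧ IsSeparable (Set.range f) ∧
      Dp μ p f h < ⊤ ∧ ¬ f =ᵐ[μ] h)
    (hsepL : ∃ D : ℕ → M → N,
      (∀ n, Measurable (D n) ∧ IsSeparable (Set.range (D n)) ∧ Dp μ p (D n) h < ⊤) ∧
      ∀ f : M → N, Measurable f → IsSeparable (Set.range f) → Dp μ p f h < ⊤ →
        ∀ ε : ENNReal, 0 < ε → ∃ n, Dp μ p f (D n) < ε) :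
    SeparableSpace N := by
  classical
  obtain ⟨f, hfm, hfs, hfh, hfne⟩ := hnontriv
  obtain ⟨D, hD, hDdense⟩ := hsepL
  have hp0 : p ≠ 0 := (zero_lt_one.trans_le hp).ne'
  suffices hdense : ∀ y, y ∈ closure (⋃ n, range (D n)) from isSeparable_univ_iff.1 <|
    (isSeparable_iUnion.2 fun n => (hD n).2.1).closure.mono fun y _ => hdense y
  intro y
  by_contra hy
  obtain ⟨δ, hδ, hδD⟩ : ∃ δ > 0, ∀ n x, δ ≤ dist y (D n x) := by
    simpa [Metric.mem_closure_iff] using hy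
  obtain ⟨B, R, hBm, hB0, hBtop, hR⟩ := exists_measure_pos_lt_top_dist_le hp0 hptop
    (stronglyMeasurable_iff_measurable_separable.2 ⟨hfm, hfs⟩)
    (stronglyMeasurable_iff_measurable_separable.2 ⟨hm, hs⟩) hfh hfne y
  set g : M → N := B.piecewise (fun _ => y) h
  have hgB : ∀ x ∈ B, g x = y := fun x hx => piecewise_eq_of_mem _ _ _ hx
  have hgBc : ∀ x ∉ B, g x = h x := fun x hx => piecewise_eq_of_notMem _ _ _ hx
  have hgh : Dp μ p g h < ⊤ :=
    (Dp_le_enorm_mul_measure_rpow hgBc fun x hx => hgB x hx ▸ hR x hx).trans_lt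
      (ENNReal.mul_lt_top enorm_lt_top (ENNReal.rpow_lt_top_of_nonneg (by positivity) hBtop.ne))
  obtain ⟨n, hn⟩ := hDdense g (measurable_const.piecewise hBm hm)
    (isSeparable_range_piecewise_const_s14 hs y) hgh (‖δ‖ₑ * μ B ^ (1 / p.toReal))
    (ENNReal.mul_pos (by simpa using hδ.ne') (ENNReal.rpow_pos hB0 hBtop.ne).ne')
  exact (enorm_mul_measure_rpow_le_Dp hp0 hptop hBm hδ.le fun x hx =>
    hgB x hx ▸ hδD n x).not_gt hn
end

section
/- Let $h: M \to N$ be bounded, measurable and separably valued. If the metric space $(N,d_N)$ is boundedly compact (closed bounded sets are compact), then the set of simple mappings is dense in $(L^\infty_h(M,N), D_\infty)$. -/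
/-! Since `D∞(f, h)` is finite and `h` is bounded, `f` takes almost all of its values in a
bounded set, which is totally bounded because `N` is proper. Cover it by finitely many `δ`-balls
and send each point of `M` to the nearest centre: this simple mapping is `δ`-close to `f` a.e. -/

open MeasureTheory Set TopologicalSpace Filter

theorem Set.Finite.exists_subset_image_Iic {α : Type*} [Nonempty α] {t : Set α} (ht : t.Finite) :
    ∃ (e : ℕ → α) (n : ℕ), t ⊆ e '' Iic n := by
  set l := ht.toFinset.toList
  refine ⟨fun k => l.getD k (Classical.arbitrary α), l.length, fun y hy => ?_⟩
  obtain ⟨k, hk, rfl⟩ := List.mem_iff_getElem.1 (by simpa [l] using hy : y ∈ l)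
  exact ⟨k, hk.le, List.getD_eq_getElem _ _ hk⟩

theorem exists_simpleFunc_dist_lt_of_totallyBounded {M N : Type*} [MeasurableSpace M]
    [PseudoMetricSpace N] [MeasurableSpace N] [OpensMeasurableSpace N] [Nonempty N]
    {f : M → N} (hf : Measurable f) {K : Set N} (hK : TotallyBounded K) {δ : ℝ}
    (hδ : 0 < δ) :
    ∃ g : SimpleFunc M N, ∀ x, f x ∈ K → dist (g x) (f x) < δ := by
  obtain ⟨t, ht, hKt⟩ := Metric.totallyBounded_iff.1 hK δ hδ
  obtain ⟨e, n, hte⟩ := ht.exists_subset_image_Iic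
  refine ⟨(SimpleFunc.nearestPt e n).comp f hf, fun x hx => ?_⟩
  obtain ⟨y, hyt, hxy⟩ := mem_iUnion₂.1 (hKt hx)
  obtain ⟨k, hkn, rfl⟩ := hte hyt
  have := SimpleFunc.edist_nearestPt_le e (f x) (mem_Iic.1 hkn)
  rw [edist_dist, edist_dist, ENNReal.ofReal_le_ofReal_iff dist_nonneg] at this
  rw [SimpleFunc.coe_comp]
  exact this.trans_lt (dist_comm (f x) (e k) ▸ hxy)

theorem Dp_top_le_of_ae_dist_le {M N : Type*} [MeasurableSpace M] [PseudoMetricSpace N]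
    {μ : Measure M} {f g : M → N} {C : ℝ} (hC : ∀ᵐ x ∂μ, dist (f x) (g x) ≤ C) :
    Dp μ ⊤ f g ≤ ENNReal.ofReal C := by
  rw [Dp, eLpNorm_exponent_top]
  refine eLpNormEssSup_le_of_ae_bound ?_
  simpa only [Real.norm_eq_abs, abs_of_nonneg dist_nonneg] using hC

theorem ae_dist_le_toReal_Dp_top {M N : Type*} [MeasurableSpace M] [PseudoMetricSpace N]
    {μ : Measure M} {f g : M → N} (hfg : Dp μ ⊤ f g ≠ ⊤) :
    ∀ᵐ x ∂μ, dist (f x) (g x) ≤ (Dp μ ⊤ f g).toReal := by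
  filter_upwards [ae_le_eLpNormEssSup (μ := μ) (f := fun x => dist (f x) (g x))] with x hx
  rw [← eLpNorm_exponent_top, ← Dp, Real.enorm_eq_ofReal dist_nonneg] at hx
  exact (ENNReal.ofReal_le_iff_le_toReal hfg).1 hx

theorem stmt16_general {M N : Type*} [MeasurableSpace M] [MetricSpace N]
    [MeasurableSpace N] [BorelSpace N] [ProperSpace N]
    (μ : Measure M)
    (h : M → N)
    (hb : Bornology.IsBounded (Set.range h))
    (f : M → N) (hfm : Measurable f)
    (hfin : Dp μ ⊤ f h < ⊤) (ε : ENNReal) (hε : 0 < ε) :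
    ∃ g : M → N, Measurable g ∧ (Set.range g).Finite ∧ Dp μ ⊤ g f < ε := by
  rcases isEmpty_or_nonempty M with _ | ⟨⟨x₀⟩⟩
  · exact ⟨f, hfm, finite_range f, by simpa [Dp] using hε⟩
  have : Nonempty N := ⟨f x₀⟩
  set K := Metric.cthickening (Dp μ ⊤ f h).toReal (range h)
  have hK : TotallyBounded K :=
    hb.cthickening.isCompact_closure.totallyBounded.subset subset_closure
  have hfK : ∀ᵐ x ∂μ, f x ∈ K := by
    filter_upwards [ae_dist_le_toReal_Dp_top hfin.ne] with x hx
    exact Metric.mem_cthickening_of_dist_le _ _ _ _ (mem_range_self x) hx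
  obtain ⟨δ, hδ, hδε⟩ := ENNReal.lt_iff_exists_nnreal_btwn.1 hε
  obtain ⟨g, hg⟩ :=
    exists_simpleFunc_dist_lt_of_totallyBounded hfm hK (NNReal.coe_pos.2 (ENNReal.coe_pos.1 hδ))
  refine ⟨g, g.measurable, g.finite_range, ?_⟩
  calc Dp μ ⊤ g f ≤ ENNReal.ofReal δ :=
        Dp_top_le_of_ae_dist_le (hfK.mono fun x hx => (hg x hx).le)
    _ = δ := ENNReal.ofReal_coe_nnreal
    _ < ε := hδε

theorem stmt16 {M N : Type*} [MeasurableSpace M] [MetricSpace N]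
    [MeasurableSpace N] [BorelSpace N] [ProperSpace N]
    (μ : Measure M)
    (h : M → N) (hm : Measurable h) (hs : IsSeparable (Set.range h))
    (hb : Bornology.IsBounded (Set.range h))
    (f : M → N) (hfm : Measurable f) (hfs : IsSeparable (Set.range f))
    (hfin : Dp μ ⊤ f h < ⊤) (ε : ENNReal) (hε : 0 < ε) :
    ∃ g : M → N, Measurable g ∧ (Set.range g).Finite ∧ Dp μ ⊤ g f < ε :=
  stmt16_general μ h hb f hfm hfin ε hε
end

section
/- Let $M$ be a normal topological space, $\Sigma_M \supseteq \mathcal{B}(M)$, and suppose $\mu_M$ is outer regular on closed sets of finite measure with respect to open sets, and inner regular on sets of finite measure with respect to closed sets. Let $N$ be a path-connected metric space and $p \in [1,\infty)$. Then for every simple mapping $g: M \to N$ that is constant equal to $z_0$ outside some measurable set of finite measure, and every $\varepsilon > 0$, there exists a continuous mapping $g_\varepsilon: M \to N$ with compact range such that $D_p(g, g_\varepsilon) < \varepsilon$ and the closure of $g_\varepsilon^{-1}(N \setminus \{z_0\})$ has finite $\mu_M$-measure. -/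
/-!
Approximate each level set `g ⁻¹' {y}`, `y ≠ z₀`, from inside by a closed set `C y` and `C y` from
outside by an open set `U y`, both up to small measure. By normality the `C y` have pairwise
disjoint open neighbourhoods `V y` with closures in `U y`, and Urysohn functions `φ y` equal to
`1` on `C y` and `0` off `V y`. Running along a path from `z₀` to `y` according to `φ y` on `V y`,
and staying at `z₀` elsewhere, gives a continuous map that agrees with `g` off a set of small
measure, on which the distance of the two maps is bounded. Its range is compact because `φ y` can
be chosen to map `V y` either into `{0, 1}` or onto `[0, 1]`.
-/

open MeasureTheory Set TopologicalSpace Filter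

open Function Topology

section Patch

variable {ι X Y : Type*} {V : ι → Set X} {h : ι → X → Y} {c : Y}

open Classical in
noncomputable def patch (V : ι → Set X) (h : ι → X → Y) (c : Y) (x : X) : Y :=
  if hx : ∃ i, x ∈ V i then h hx.choose x else c

theorem patch_eq_of_mem (hV : Pairwise (Disjoint on V)) {i : ι} {x : X} (hx : x ∈ V i) :
    patch V h c x = h i x := by
  have hex : ∃ i, x ∈ V i := ⟨i, hx⟩
  have hi : hex.choose = i := hV.eq <| not_disjoint_iff.2 ⟨x, hex.choose_spec, hx⟩
  rw [patch, dif_pos hex, hi]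

theorem patch_eq_of_forall_notMem {x : X} (hx : ∀ i, x ∉ V i) : patch V h c x = c := by
  rw [patch, dif_neg (not_exists.2 hx)]

theorem range_patch_subset (hV : Pairwise (Disjoint on V)) :
    range (patch V h c) ⊆ insert c (⋃ i, h i '' V i) := by
  rintro _ ⟨x, rfl⟩
  by_cases hx : ∃ i, x ∈ V i
  · obtain ⟨i, hi⟩ := hx
    exact .inr <| mem_iUnion.2 ⟨i, x, hi, (patch_eq_of_mem hV hi).symm⟩
  · exact .inl <| patch_eq_of_forall_notMem (not_exists.1 hx)

theorem image_subset_range_patch (hV : Pairwise (Disjoint on V)) (i : ι) :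
    h i '' V i ⊆ range (patch V h c) := by
  rintro _ ⟨x, hx, rfl⟩
  exact ⟨x, patch_eq_of_mem hV hx⟩

variable [TopologicalSpace Y]

theorem isCompact_range_patch [Finite ι] (hV : Pairwise (Disjoint on V))
    (hK : ∀ i, IsCompact (h i '' V i)) : IsCompact (range (patch V h c)) := by
  have hsplit : range (patch V h c) = (⋃ i, h i '' V i) ∪ (range (patch V h c) ∩ {c}) := by
    refine subset_antisymm (fun z hz => ?_) ?_
    · rcases range_patch_subset hV hz with rfl | hz'
      exacts [.inr ⟨hz, rfl⟩, .inl hz']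
    · exact union_subset (iUnion_subset (image_subset_range_patch hV)) inter_subset_left
  rw [hsplit]
  exact (isCompact_iUnion hK).union ((finite_singleton c).subset inter_subset_right).isCompact

variable [TopologicalSpace X]

theorem continuous_patch [Finite ι] (hV : Pairwise (Disjoint on V)) (hVo : ∀ i, IsOpen (V i))
    (hh : ∀ i, Continuous (h i)) (hc : ∀ i, ∀ x ∉ V i, h i x = c) :
    Continuous (patch V h c) := by
  refine continuous_iff_continuousAt.2 fun x => ?_
  by_cases hx : ∃ i, x ∈ V i
  · obtain ⟨i, hi⟩ := hx
    refine (hh i).continuousAt.congr ?_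
    filter_upwards [(hVo i).mem_nhds hi] with x' hx' using (patch_eq_of_mem hV hx').symm
  · rw [not_exists] at hx
    rw [ContinuousAt, patch_eq_of_forall_notMem hx]
    intro W hW
    rw [Filter.mem_map]
    have hnear : ∀ᶠ x' in 𝓝 x, ∀ i, h i x' ∈ W := eventually_all.2 fun i =>
      (hh i).continuousAt.preimage_mem_nhds (by rwa [hc i x (hx i)])
    filter_upwards [hnear] with x' hx'
    by_cases hx'V : ∃ i, x' ∈ V i
    · obtain ⟨i, hi⟩ := hx'V
      simpa only [mem_preimage, patch_eq_of_mem hV hi] using hx' i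
    · simpa only [mem_preimage, patch_eq_of_forall_notMem (not_exists.1 hx'V)] using
        mem_of_mem_nhds hW

end Patch

section Normal

variable {X : Type*} [TopologicalSpace X] [NormalSpace X]

theorem exists_pairwise_disjoint_isOpen_closure_subset {ι : Type*} [Finite ι] {C U : ι → Set X}
    (hC : ∀ i, IsClosed (C i)) (hU : ∀ i, IsOpen (U i)) (hCU : ∀ i, C i ⊆ U i)
    (hdisj : Pairwise (Disjoint on C)) :
    ∃ V : ι → Set X, (∀ i, IsOpen (V i)) ∧ (∀ i, C i ⊆ V i) ∧ (∀ i, closure (V i) ⊆ U i) ∧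
      Pairwise (Disjoint on V) := by
  have hothers : ∀ i, IsClosed (⋃ (j) (_ : j ≠ i), C j) := fun i =>
    isClosed_iUnion_of_finite fun j => isClosed_iUnion_of_finite fun _ => hC j
  have hW : ∀ i, ∃ W, IsOpen W ∧ C i ⊆ W ∧ closure W ⊆ U i ∩ (⋃ (j) (_ : j ≠ i), C j)ᶜ :=
    fun i => normal_exists_closure_subset (hC i) ((hU i).inter (hothers i).isOpen_compl) <|
      subset_inter (hCU i) <| subset_compl_comm.1 <| iUnion₂_subset fun j hj =>
        (hdisj hj).symm.subset_compl_left
  choose W hWo hCW hWcl using hW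
  have hWC : ∀ {i j}, i ≠ j → Disjoint (closure (W j)) (C i) := fun {i j} hij =>
    disjoint_compl_left.mono ((hWcl j).trans inter_subset_right)
      (subset_iUnion₂ (s := fun k (_ : k ≠ j) => C k) i hij)
  -- shrinking each `W i` away from the closures of the others makes them disjoint
  refine ⟨fun i => W i \ ⋃ (j) (_ : j ≠ i), closure (W j), fun i => (hWo i).sdiff ?_,
    fun i x hx => ⟨hCW i hx, ?_⟩, fun i => ?_, fun i j hij => ?_⟩
  · exact isClosed_iUnion_of_finite fun j => isClosed_iUnion_of_finite fun _ => isClosed_closure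
  · simp only [mem_iUnion, not_exists]
    exact fun j hji hxj => (hWC (Ne.symm hji)).notMem_of_mem_left hxj hx
  · exact (closure_mono sdiff_subset).trans <| (hWcl i).trans inter_subset_left
  · refine Set.disjoint_left.2 fun x hxi hxj => hxi.2 ?_
    exact mem_iUnion₂.2 ⟨j, hij.symm, subset_closure hxj.1⟩

theorem exists_continuous_eqOn_one_isCompact_image {C V : Set X} (hC : IsClosed C)
    (hV : IsOpen V) (hCV : C ⊆ V) :
    ∃ φ : X → ℝ, Continuous φ ∧ EqOn φ 1 C ∧ EqOn φ 0 Vᶜ ∧ IsCompact (φ '' V) := by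
  obtain ⟨f, hf0, hf1, hf01⟩ := exists_continuous_zero_one_of_isClosed hV.isClosed_compl hC
    (disjoint_compl_left.mono_right hCV)
  by_cases hsurj : Ioo (0 : ℝ) 1 ⊆ range f
  · -- `f` attains `[1/3, 2/3] ⊆ (0, 1)`, and only on `V`, so `clip (3 f - 1)` attains `[0, 1]` on `V`
    refine ⟨fun x => max 0 (min 1 (3 * f x - 1)), by fun_prop, fun x hx => ?_,
      fun x hx => ?_, ?_⟩
    · norm_num [hf1 hx]
    · simp [hf0 hx]
    · convert isCompact_Icc (a := (0 : ℝ)) (b := 1)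
      refine subset_antisymm (image_subset_iff.2 fun x _ => ⟨le_max_left _ _,
        max_le zero_le_one (min_le_left _ _)⟩) fun s hs => ?_
      obtain ⟨x, hx⟩ := hsurj ⟨by linarith [hs.1], by linarith [hs.2]⟩ (a := (s + 1) / 3)
      have hxV : x ∈ V := by
        by_contra hxV
        have h0 : f x = 0 := hf0 hxV
        linarith [hs.1]
      refine ⟨x, hxV, ?_⟩
      show max 0 (min 1 (3 * f x - 1)) = s
      rw [hx, show 3 * ((s + 1) / 3) - 1 = s by ring, min_eq_right hs.2, max_eq_right hs.1]
  · -- a value `α` missed by `f` cuts `X` into the clopen sets `{f < α}` and `{α < f}`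
    obtain ⟨α, hα, hαf⟩ := not_subset.1 hsurj
    have hclopen : IsClopen {x | α < f x} := by
      have hle : {x | α < f x} = {x | α ≤ f x} := by
        ext x
        show α < f x ↔ α ≤ f x
        exact ⟨le_of_lt, fun h => h.lt_of_ne fun h' => hαf ⟨x, h'.symm⟩⟩
      exact ⟨hle ▸ isClosed_le continuous_const f.continuous,
        isOpen_lt continuous_const f.continuous⟩
    refine ⟨{x | α < f x}.indicator 1, continuous_const.indicator (by simp [hclopen.frontier_eq]),
      fun x hx => ?_, fun x hx => ?_, ?_⟩
    · simp [hf1 hx, hα.2]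
    · simp [hf0 hx, hα.1.le]
    · refine ((finite_singleton 1).insert 0 |>.subset ?_).isCompact
      rintro _ ⟨x, -, rfl⟩
      by_cases hx : α < f x <;> simp [hx]

theorem exists_continuous_eqOn_of_pairwise_disjoint_isClosed {Y ι : Type*} [TopologicalSpace Y]
    [Finite ι] {C U : ι → Set X} (hC : ∀ i, IsClosed (C i)) (hU : ∀ i, IsOpen (U i))
    (hCU : ∀ i, C i ⊆ U i) (hdisj : Pairwise (Disjoint on C)) {c : Y} {y : ι → Y}
    (γ : ∀ i, Path c (y i)) :
    ∃ F : X → Y, Continuous F ∧ IsCompact (range F) ∧ range F ⊆ insert c (⋃ i, range (γ i)) ∧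
      (∀ i, EqOn F (fun _ => y i) (C i)) ∧ closure {x | F x ≠ c} ⊆ ⋃ i, U i := by
  obtain ⟨V, hVo, hCV, hVU, hVdisj⟩ :=
    exists_pairwise_disjoint_isOpen_closure_subset hC hU hCU hdisj
  choose φ hφ hφC hφV hφK using fun i =>
    exists_continuous_eqOn_one_isCompact_image (hC i) (hVo i) (hCV i)
  set h : ι → X → Y := fun i => (γ i).extend ∘ φ i
  have hc : ∀ i, ∀ x ∉ V i, h i x = c := fun i x hx => by simp [h, hφV i hx]
  have hsupp : {x | patch V h c x ≠ c} ⊆ ⋃ i, V i := fun x hx => by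
    by_contra hxV
    exact hx (patch_eq_of_forall_notMem fun i hi => hxV (mem_iUnion_of_mem i hi))
  refine ⟨patch V h c, continuous_patch hVdisj hVo (fun i => (γ i).continuous_extend.comp (hφ i)) hc,
    isCompact_range_patch hVdisj fun i => ?_, (range_patch_subset hVdisj).trans ?_,
    fun i x hx => ?_, ?_⟩
  · rw [image_comp]
    exact (hφK i).image (γ i).continuous_extend
  · refine insert_subset_insert (iUnion_mono fun i => (image_subset_range _ _).trans ?_)
    exact (range_comp_subset_range _ _).trans (γ i).extend_range.subset
  · rw [patch_eq_of_mem hVdisj (hCV i hx)]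
    simp [h, hφC i hx]
  · calc closure {x | patch V h c x ≠ c} ⊆ closure (⋃ i, V i) := closure_mono hsupp
      _ = ⋃ i, closure (V i) := closure_iUnion_of_finite V
      _ ⊆ ⋃ i, U i := iUnion_mono hVU

end Normal

theorem Dp_le_of_eqOn_compl {M N : Type*} [MeasurableSpace M] [PseudoMetricSpace N]
    (μ : Measure M) (p : ENNReal) {f g : M → N} {E : Set M} {R : ℝ}
    (hR : ∀ x, dist (f x) (g x) ≤ R) (hE : EqOn f g Eᶜ) :
    Dp μ p f g ≤ ‖R‖ₑ * μ E ^ (1 / p.toReal) := by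
  refine (eLpNorm_mono_real fun x => ?_).trans (eLpNorm_indicator_const_le R p)
  by_cases hx : x ∈ E
  · rw [indicator_of_mem hx, Real.norm_of_nonneg dist_nonneg]
    exact hR x
  · rw [indicator_of_notMem hx, hE hx, dist_self, norm_zero]

theorem ENNReal.exists_pos_forall_le_mul_rpow_lt {c : ENNReal} (hc : c ≠ ⊤) {q : ℝ} (hq : 0 < q)
    {ε : ENNReal} (hε : 0 < ε) : ∃ δ > 0, ∀ t ≤ δ, c * t ^ q < ε := by
  have hlim : Tendsto (fun t : ENNReal => c * t ^ q) (𝓝 0) (𝓝 0) := by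
    simpa [ENNReal.zero_rpow_of_pos hq] using
      ENNReal.Tendsto.const_mul ((ENNReal.continuous_rpow_const (y := q)).tendsto 0) (.inr hc)
  simpa using ENNReal.nhds_zero_basis_Iic.eventually_iff.1 (hlim.eventually (gt_mem_nhds hε))

theorem exists_isClosed_isOpen_measure_sdiff_le {M : Type*} [TopologicalSpace M]
    [MeasurableSpace M] [OpensMeasurableSpace M] {μ : Measure M}
    (houter : ∀ C : Set M, IsClosed C → μ C ≠ ⊤ → ∀ ε : ENNReal, 0 < ε →
      ∃ U : Set M, IsOpen U ∧ C ⊆ U ∧ μ U ≤ μ C + ε)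
    (hinner : ∀ B : Set M, MeasurableSet B → μ B ≠ ⊤ → ∀ ε : ENNReal, 0 < ε →
      ∃ C : Set M, IsClosed C ∧ C ⊆ B ∧ μ B ≤ μ C + ε)
    {A : Set M} (hA : MeasurableSet A) (hAfin : μ A ≠ ⊤) {η : ENNReal} (hη : 0 < η) :
    ∃ C U : Set M, IsClosed C ∧ IsOpen U ∧ C ⊆ A ∧ C ⊆ U ∧ μ U ≠ ⊤ ∧
      μ ((A ∪ U) \ C) ≤ η := by
  have hη2 : 0 < η / 2 := ENNReal.half_pos hη.ne'
  obtain ⟨C, hC, hCA, hAC⟩ := hinner A hA hAfin _ hη2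
  have hCfin : μ C ≠ ⊤ := ne_top_of_le_ne_top hAfin (measure_mono hCA)
  obtain ⟨U, hU, hCU, hUC⟩ := houter C hC hCfin (min (η / 2) 1) (lt_min hη2 one_pos)
  refine ⟨C, U, hC, hU, hCA, hCU, ne_top_of_le_ne_top ?_ hUC, ?_⟩
  · exact ENNReal.add_ne_top.2 ⟨hCfin, ne_top_of_le_ne_top ENNReal.one_ne_top (min_le_right _ _)⟩
  calc μ ((A ∪ U) \ C) = μ ((A \ C) ∪ (U \ C)) := by rw [union_sdiff_distrib]
    _ ≤ μ (A \ C) + μ (U \ C) := measure_union_le _ _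
    _ ≤ η / 2 + η / 2 := by
      gcongr
      · exact (measure_sdiff_le_iff_le_add hC.nullMeasurableSet hCA hCfin).2 hAC
      · exact (measure_sdiff_le_iff_le_add hC.nullMeasurableSet hCU hCfin).2 <|
          hUC.trans (add_le_add_right (min_le_left _ _) _)
    _ = η := ENNReal.add_halves η

theorem measure_iUnion_le_of_le_div {α ι : Type*} [MeasurableSpace α] [Fintype ι]
    (μ : Measure α) {s : ι → Set α} {δ : ENNReal} (h : ∀ i, μ (s i) ≤ δ / Fintype.card ι) :
    μ (⋃ i, s i) ≤ δ := calc
  _ ≤ ∑ i, μ (s i) := measure_iUnion_fintype_le _ _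
  _ ≤ ∑ _i : ι, δ / Fintype.card ι := Finset.sum_le_sum fun i _ => h i
  _ ≤ δ := by simpa using ENNReal.mul_div_le

theorem eqOn_compl_iUnion_sdiff {X Y ι : Type*} {f F : X → Y} {c : Y} {y : ι → Y}
    {C U : ι → Set X} (hf : ∀ x, f x = c ∨ ∃ i, f x = y i) (hCf : ∀ i, C i ⊆ f ⁻¹' {y i})
    (hCF : ∀ i, EqOn F (fun _ => y i) (C i)) (hFU : ∀ x, F x ≠ c → ∃ i, x ∈ U i) :
    EqOn f F (⋃ i, (f ⁻¹' {y i} ∪ U i) \ C i)ᶜ := by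
  intro x hx
  have hx : ∀ i, x ∈ f ⁻¹' {y i} ∪ U i → x ∈ C i := fun i hi =>
    by_contra fun hC => hx (mem_iUnion.2 ⟨i, hi, hC⟩)
  by_cases hC : ∃ i, x ∈ C i
  · obtain ⟨i, hi⟩ := hC
    rw [hCF i hi, hCf i hi]
  · push Not at hC
    have hfc : f x = c := (hf x).resolve_right fun ⟨i, hi⟩ => hC i (hx i (.inl hi))
    have hFc : F x = c := by
      by_contra hne
      obtain ⟨i, hi⟩ := hFU x hne
      exact hC i (hx i (.inr hi))
    rw [hfc, hFc]

theorem stmt18_general {M N : Type*} [TopologicalSpace M] [NormalSpace M]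
    [MeasurableSpace M] [OpensMeasurableSpace M]
    [MetricSpace N] [PathConnectedSpace N] [MeasurableSpace N] [BorelSpace N]
    (μ : Measure M)
    (houter : ∀ C : Set M, IsClosed C → μ C ≠ ⊤ → ∀ ε : ENNReal, 0 < ε →
      ∃ U : Set M, IsOpen U ∧ C ⊆ U ∧ μ U ≤ μ C + ε)
    (hinner : ∀ B : Set M, MeasurableSet B → μ B ≠ ⊤ → ∀ ε : ENNReal, 0 < ε →
      ∃ C : Set M, IsClosed C ∧ C ⊆ B ∧ μ B ≤ μ C + ε)
    (p : ENNReal) (hp : 1 ≤ p) (hptop : p ≠ ⊤)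
    (g : M → N) (hgm : Measurable g) (hgfin : (Set.range g).Finite)
    (B : Set M) (hBfin : μ B ≠ ⊤)
    (z₀ : N) (hconst : ∀ x ∉ B, g x = z₀)
    (ε : ENNReal) (hε : 0 < ε) :
    ∃ gε : M → N, Continuous gε ∧ IsCompact (Set.range gε) ∧
      Dp μ p g gε < ε ∧ μ (closure {x | gε x ≠ z₀}) < ⊤ := by
  let ι := ↥(range g \ {z₀})
  have : Fintype ι := hgfin.sdiff.fintype
  let γ : ∀ y : ι, Path z₀ (y : N) := fun y => PathConnectedSpace.somePath z₀ y
  have hg : ∀ x, g x = z₀ ∨ ∃ y : ι, g x = y := fun x =>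
    or_iff_not_imp_left.2 fun hx => ⟨⟨g x, ⟨x, rfl⟩, hx⟩, rfl⟩
  have hgK : ∀ x, g x ∈ insert z₀ (⋃ y, range (γ y)) := fun x => by
    rcases hg x with hx | ⟨y, hy⟩
    exacts [.inl hx, .inr (mem_iUnion.2 ⟨y, 1, by simp [hy]⟩)]
  -- the bound `R` must not depend on the approximation, whose construction depends on `δ`
  obtain ⟨R, hR⟩ := Metric.isBounded_iff.1
    ((isCompact_iUnion fun y => isCompact_range (γ y).continuous).insert z₀).isBounded
  have hq : 0 < 1 / p.toReal := one_div_pos.2 <|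
    ENNReal.toReal_pos (zero_lt_one.trans_le hp).ne' hptop
  obtain ⟨δ, hδ, hsmall⟩ := ENNReal.exists_pos_forall_le_mul_rpow_lt enorm_ne_top hq hε (c := ‖R‖ₑ)
  have hfiber : ∀ y : ι, μ (g ⁻¹' {(y : N)}) ≠ ⊤ := fun y => ne_top_of_le_ne_top hBfin <|
    measure_mono fun x hx => by_contra fun hxB => y.2.2 (hx.symm.trans (hconst x hxB))
  choose C U hC hU hCA hCU hUfin hCsmall using fun y : ι =>
    exists_isClosed_isOpen_measure_sdiff_le houter hinner (hgm (measurableSet_singleton _))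
      (hfiber y) (ENNReal.div_pos hδ.ne' (ENNReal.natCast_ne_top (Fintype.card ι)))
  have hCdisj : Pairwise (Disjoint on C) := fun y y' hne =>
    ((disjoint_singleton.2 (Subtype.coe_injective.ne hne)).preimage g).mono (hCA y) (hCA y')
  obtain ⟨F, hFc, hFK, hFrange, hFC, hFsupp⟩ :=
    exists_continuous_eqOn_of_pairwise_disjoint_isClosed hC hU hCU hCdisj γ
  have hgF := eqOn_compl_iUnion_sdiff hg hCA hFC fun x hx =>
    mem_iUnion.1 (hFsupp (subset_closure hx))
  refine ⟨F, hFc, hFK, ?_, ?_⟩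
  · exact (Dp_le_of_eqOn_compl μ p (fun x => hR (hgK x) (hFrange ⟨x, rfl⟩)) hgF).trans_lt
      (hsmall _ (measure_iUnion_le_of_le_div μ hCsmall))
  · calc μ (closure {x | F x ≠ z₀}) ≤ ∑ y, μ (U y) :=
          (measure_mono hFsupp).trans (measure_iUnion_fintype_le _ _)
      _ < ⊤ := ENNReal.sum_lt_top.2 fun y _ => (hUfin y).lt_top

theorem stmt18 {M N : Type*} [TopologicalSpace M] [NormalSpace M]
    [MeasurableSpace M] [OpensMeasurableSpace M]
    [MetricSpace N] [PathConnectedSpace N] [MeasurableSpace N] [BorelSpace N]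
    (μ : Measure M)
    (houter : ∀ C : Set M, IsClosed C → μ C ≠ ⊤ → ∀ ε : ENNReal, 0 < ε →
      ∃ U : Set M, IsOpen U ∧ C ⊆ U ∧ μ U ≤ μ C + ε)
    (hinner : ∀ B : Set M, MeasurableSet B → μ B ≠ ⊤ → ∀ ε : ENNReal, 0 < ε →
      ∃ C : Set M, IsClosed C ∧ C ⊆ B ∧ μ B ≤ μ C + ε)
    (p : ENNReal) (hp : 1 ≤ p) (hptop : p ≠ ⊤)
    (g : M → N) (hgm : Measurable g) (hgfin : (Set.range g).Finite)
    (B : Set M) (hB : MeasurableSet B) (hBfin : μ B ≠ ⊤)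
    (z₀ : N) (hconst : ∀ x ∉ B, g x = z₀)
    (ε : ENNReal) (hε : 0 < ε) :
    ∃ gε : M → N, Continuous gε ∧ IsCompact (Set.range gε) ∧
      Dp μ p g gε < ε ∧ μ (closure {x | gε x ≠ z₀}) < ⊤ :=
  stmt18_general μ houter hinner p hp hptop g hgm hgfin B hBfin z₀ hconst ε hε
end
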